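/- arXiv:2206.14112 — 3 statements merged into one kernel-verified Lean document; each statement's English description precedes it below -/
import Mathlib

section
/- Let N be a finite player set and (ω,Σ) a weight system on N. Let P_{ω,Σ} be the probability distribution on linear orders (bijective sequences) L of N defined recursively by: the first element of L equals i with probability ω̄^N_i/ω̄^N, and conditionally on the first element being i, the remaining order is distributed according to the analogous distribution for the weight system restricted to N∖{i}. Then for every TU-game (N,v) and every player i, the expectation under P_{ω,Σ} of v({j : L(j) ≥ L(i)}) − v({j : L(j) > L(i)}) equals the (ω,Σ)-weighted Shapley value Φ^ω_i(v) (here L(j) denotes the position of j in the order, with earlier positions smaller). -/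
open Finset

variable {α : Type*}

noncomputable section

/-- `ω̄^S_i`: the weight of `i` if `i` belongs to the top-priority part `S̄` of `S`, else `0`.
Here the ordered partition `Σ` is encoded by the priority function `p`. -/
def wbar [DecidableEq α] (ω : α → ℝ) (p : α → ℕ) (S : Finset α) (i : α) : ℝ :=
  if i ∈ S ∧ p i = S.sup p then ω i else 0

/-- `ω̄^S = ∑_{i ∈ S̄} ω_i`. -/
def wbarSum [DecidableEq α] (ω : α → ℝ) (p : α → ℕ) (S : Finset α) : ℝ :=
  ∑ i ∈ S, wbar ω p S i

/-- unanimity coefficients `λ_S(v)` (Harsanyi dividends). -/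
def unanimityCoeff [DecidableEq α] (v : Finset α → ℝ) (S : Finset α) : ℝ :=
  ∑ T ∈ S.powerset, (-1 : ℝ) ^ (S.card - T.card) * v T

/-- `(ω,Σ)`-weighted Shapley value of player `i` for the game `v` with ground coalition `M`
(note that `wbar ω p S i = 0` unless `i ∈ S̄`). -/
def wShapley [DecidableEq α] (ω : α → ℝ) (p : α → ℕ) (v : Finset α → ℝ)
    (M : Finset α) (i : α) : ℝ :=
  ∑ S ∈ M.powerset, wbar ω p S i / wbarSum ω p S * unanimityCoeff v S

/-- The probability `P_{ω,Σ}(σ)` of a linear order `σ` (where `σ j` is the position of `j`,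
earlier positions smaller): at each stage `t` the next player `σ.symm t` is drawn from the
remaining set `{j : σ j ≥ t}` with probability proportional to the weights of the weight system
restricted to this remaining set; this is exactly the recursive definition of `P_{ω,Σ}`. -/
def orderProb [Fintype α] [DecidableEq α] (ω : α → ℝ) (p : α → ℕ)
    (σ : α ≃ Fin (Fintype.card α)) : ℝ :=
  ∏ t : Fin (Fintype.card α),
    wbar ω p (Finset.univ.filter fun j => t ≤ σ j) (σ.symm t) /
      wbarSum ω p (Finset.univ.filter fun j => t ≤ σ j)

/-!
Condition on the first player `a` of the order, drawn with probability `ω̄^N_a / ω̄^N`. If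
`a = i`, the marginal contribution of `i` is `v(N) − v(N ∖ i)`; otherwise it is the marginal
contribution of `i` in the remaining order of `N ∖ a`, which is distributed according to the
restricted weight system. By induction the expectation therefore satisfies
`E_i(N) = ∑_a ω̄^N_a / ω̄^N · (if a = i then v(N) − v(N ∖ i) else Φ_i(N ∖ a))`.
The weighted Shapley value satisfies the same recursion: `Φ_i(N ∖ a)` is `Φ_i(N)` minus the
dividend shares of the coalitions containing `a`, and weighting these losses by `ω̄^N_a` gives,
for each `S ∋ i`, the factor `(∑_{a ∈ S} ω̄^N_a) · ω̄^S_i / ω̄^S = ω̄^N_i`, so that in total they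
amount to `ω̄^N_i / ω̄^N · ∑_{S ∋ i} λ_S = ω̄^N_i / ω̄^N · (v(N) − v(N ∖ i))`
by Möbius inversion.
-/

section Dividends

variable {β : Type*} [DecidableEq β]

theorem sum_Icc_neg_one_pow_card_sub {U T : Finset β} (hUT : U ⊆ T) :
    ∑ S ∈ Icc U T, (-1 : ℝ) ^ (#S - #U) = if U = T then 1 else 0 := by
  have hdisj : ∀ R ∈ (T \ U).powerset, Disjoint U R := fun R hR =>
    disjoint_sdiff.mono_right (mem_powerset.mp hR)
  rw [Icc_eq_image_powerset hUT, sum_image fun R₁ h₁ R₂ h₂ h => by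
    rw [← union_sdiff_cancel_left (hdisj R₁ h₁), h, union_sdiff_cancel_left (hdisj R₂ h₂)]]
  have hcard : ∀ R ∈ (T \ U).powerset, #(U ∪ R) - #U = #R := fun R hR => by
    rw [card_union_of_disjoint (hdisj R hR)]; omega
  rw [sum_congr rfl fun R hR => by rw [hcard R hR]]
  have := congrArg (Int.cast : ℤ → ℝ) (sum_powerset_neg_one_pow_card (x := T \ U))
  push_cast at this
  rw [this]
  refine if_congr (sdiff_eq_empty_iff_subset.trans ?_) rfl rfl
  exact ⟨fun h => hUT.antisymm h, fun h => h ▸ subset_refl U⟩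

theorem sum_powerset_unanimityCoeff (v : Finset β → ℝ) (T : Finset β) :
    ∑ S ∈ T.powerset, unanimityCoeff v S = v T := by
  unfold unanimityCoeff
  rw [sum_comm' (t' := T.powerset) (s' := fun U => Icc U T) fun S U => by
    simp only [mem_powerset, mem_Icc]
    exact ⟨fun ⟨hST, hUS⟩ => ⟨⟨hUS, hST⟩, hUS.trans hST⟩, fun ⟨⟨hUS, hST⟩, _⟩ => ⟨hST, hUS⟩⟩]
  rw [sum_congr rfl fun U hU => by
    rw [← sum_mul, sum_Icc_neg_one_pow_card_sub (mem_powerset.mp hU), ite_mul, one_mul, zero_mul]]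
  simp

theorem sum_filter_mem_unanimityCoeff (v : Finset β → ℝ) (N : Finset β) (i : β) :
    ∑ S ∈ N.powerset with i ∈ S, unanimityCoeff v S = v N - v (N.erase i) := by
  have hnot : {S ∈ N.powerset | i ∉ S} = (N.erase i).powerset := by
    ext S; simp [subset_erase]
  rw [eq_sub_iff_add_eq, ← sum_powerset_unanimityCoeff v (N.erase i), ← hnot,
    sum_filter_add_sum_filter_not, sum_powerset_unanimityCoeff]

end Dividends

section Weights

variable {β : Type*} [DecidableEq β] (ω : β → ℝ) (p : β → ℕ)

theorem wbar_of_notMem {S : Finset β} {i : β} (h : i ∉ S) : wbar ω p S i = 0 :=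
  if_neg fun h' => h h'.1

theorem wbarSum_pos (hω : ∀ i, 0 < ω i) {S : Finset β} (hS : S.Nonempty) :
    0 < wbarSum ω p S := by
  obtain ⟨i, hi, hsup⟩ := exists_mem_eq_sup S hS p
  refine sum_pos' (fun j _ => ?_) ⟨i, hi, ?_⟩
  · unfold wbar; split_ifs <;> simp [(hω j).le]
  · rw [wbar, if_pos ⟨hi, hsup.symm⟩]; exact hω i

theorem wbar_of_subset {S N : Finset β} (hSN : S ⊆ N) {a : β} (ha : a ∈ S) :
    wbar ω p N a = if S.sup p = N.sup p then wbar ω p S a else 0 := by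
  have haS : p a ≤ S.sup p := le_sup ha
  have hSN' : S.sup p ≤ N.sup p := sup_mono hSN
  unfold wbar
  by_cases hS : S.sup p = N.sup p
  · simp only [hS, ha, hSN ha, true_and, if_true]
  · rw [if_neg hS, if_neg fun h => hS (by omega)]

/-- Within `S ⊆ N`, weight in `N` sits only on players of top `N`-priority; if `S` has any,
they form `S̄`, whence the normalisation cancels. -/
theorem wbar_div_wbarSum_mul_sum_wbar (hω : ∀ i, 0 < ω i) {S N : Finset β} (hSN : S ⊆ N)
    (i : β) :
    wbar ω p S i / wbarSum ω p S * ∑ a ∈ S, wbar ω p N a = if i ∈ S then wbar ω p N i else 0 := by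
  by_cases hi : i ∈ S
  · rw [if_pos hi, sum_congr rfl fun a ha => wbar_of_subset ω p hSN ha, wbar_of_subset ω p hSN hi]
    split_ifs
    · exact div_mul_cancel₀ _ (wbarSum_pos ω p hω ⟨i, hi⟩).ne'
    · simp
  · rw [if_neg hi, wbar_of_notMem ω p hi, zero_div, zero_mul]

end Weights

theorem Finset.sum_powerset_map {β γ M : Type*} [DecidableEq β] [AddCommMonoid M] (e : γ ↪ β)
    (s : Finset γ) (f : Finset β → M) :
    ∑ t ∈ (s.map e).powerset, f t = ∑ t ∈ s.powerset, f (t.map e) := by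
  rw [map_eq_image, powerset_image, sum_image fun t _ t' _ h => map_injective e (by
    simpa only [map_eq_image] using h)]
  simp only [map_eq_image]

section Relabel

variable {β γ : Type*} [DecidableEq β] [DecidableEq γ] (e : γ ↪ β)

theorem wbar_comp_embedding (ω : β → ℝ) (p : β → ℕ) (S : Finset γ) (x : γ) :
    wbar (ω ∘ e) (p ∘ e) S x = wbar ω p (S.map e) (e x) := by
  simp only [wbar, mem_map' e, sup_map, Function.comp_apply]

theorem wbarSum_comp_embedding (ω : β → ℝ) (p : β → ℕ) (S : Finset γ) :
    wbarSum (ω ∘ e) (p ∘ e) S = wbarSum ω p (S.map e) := by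
  simp only [wbarSum, sum_map, wbar_comp_embedding]

theorem unanimityCoeff_comp_map (v : Finset β → ℝ) (T : Finset γ) :
    unanimityCoeff (fun U => v (U.map e)) T = unanimityCoeff v (T.map e) := by
  simp only [unanimityCoeff, Finset.sum_powerset_map, card_map]

theorem wShapley_comp_embedding (ω : β → ℝ) (p : β → ℕ) (v : Finset β → ℝ) (M : Finset γ)
    (x : γ) :
    wShapley (ω ∘ e) (p ∘ e) (fun U => v (U.map e)) M x = wShapley ω p v (M.map e) (e x) := by
  simp only [wShapley, Finset.sum_powerset_map, wbar_comp_embedding, wbarSum_comp_embedding,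
    unanimityCoeff_comp_map]

end Relabel

section Recursion

variable {β : Type*} [DecidableEq β] (ω : β → ℝ) (p : β → ℕ) (v : Finset β → ℝ)

theorem wShapley_of_notMem {M : Finset β} {i : β} (hi : i ∉ M) : wShapley ω p v M i = 0 :=
  sum_eq_zero fun S hS => by
    rw [wbar_of_notMem ω p fun h => hi (mem_powerset.mp hS h), zero_div, zero_mul]

theorem wShapley_erase (N : Finset β) (a i : β) :
    wShapley ω p v (N.erase a) i = wShapley ω p v N i -
      ∑ S ∈ N.powerset with a ∈ S, wbar ω p S i / wbarSum ω p S * unanimityCoeff v S := by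
  have hnot : {S ∈ N.powerset | a ∉ S} = (N.erase a).powerset := by
    ext S; simp [subset_erase]
  rw [eq_sub_iff_add_eq, add_comm, wShapley, ← hnot, sum_filter_add_sum_filter_not, wShapley]

theorem sum_wbar_mul_sum_filter_mem (hω : ∀ i, 0 < ω i) (N : Finset β) (i : β) :
    ∑ a ∈ N, wbar ω p N a *
        ∑ S ∈ N.powerset with a ∈ S, wbar ω p S i / wbarSum ω p S * unanimityCoeff v S =
      wbar ω p N i * (v N - v (N.erase i)) := by
  calc
    _ = ∑ S ∈ N.powerset, ∑ a ∈ S,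
          wbar ω p N a * (wbar ω p S i / wbarSum ω p S * unanimityCoeff v S) := by
      simp only [mul_sum]
      exact sum_comm' fun a S => by
        simp only [mem_filter, mem_powerset]
        exact ⟨fun ⟨_, hS, ha⟩ => ⟨ha, hS⟩, fun ⟨ha, hS⟩ => ⟨hS ha, hS, ha⟩⟩
    _ = ∑ S ∈ N.powerset, (if i ∈ S then wbar ω p N i else 0) * unanimityCoeff v S :=
      sum_congr rfl fun S hS => by
        rw [← wbar_div_wbarSum_mul_sum_wbar ω p hω (mem_powerset.mp hS), ← sum_mul]
        ring
    _ = wbar ω p N i * (v N - v (N.erase i)) := by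
      rw [← sum_filter_mem_unanimityCoeff, mul_sum, sum_filter]
      exact sum_congr rfl fun S _ => by split_ifs <;> simp

theorem wShapley_eq_sum_wbar_div_mul (hω : ∀ i, 0 < ω i) {N : Finset β} {i : β} (hi : i ∈ N) :
    wShapley ω p v N i = ∑ a ∈ N, wbar ω p N a / wbarSum ω p N *
      if a = i then v N - v (N.erase i) else wShapley ω p v (N.erase a) i := by
  set C := fun a => ∑ S ∈ N.powerset with a ∈ S,
    wbar ω p S i / wbarSum ω p S * unanimityCoeff v S
  have hW : wbarSum ω p N ≠ 0 := (wbarSum_pos ω p hω ⟨i, hi⟩).ne'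
  have hself : wShapley ω p v N i = C i := by
    have := wShapley_erase ω p v N i i
    rw [wShapley_of_notMem ω p v (notMem_erase i N)] at this
    linarith
  have hterm : ∀ a, wbar ω p N a / wbarSum ω p N *
      (if a = i then v N - v (N.erase i) else wShapley ω p v (N.erase a) i) =
      (wbar ω p N a * wShapley ω p v N i - wbar ω p N a * C a +
        if a = i then wbar ω p N i * (v N - v (N.erase i)) else 0) / wbarSum ω p N := by
    intro a
    split_ifs with h
    · rw [h, hself]; ring
    · rw [wShapley_erase]; ring
  rw [sum_congr rfl fun a _ => hterm a, ← sum_div, sum_add_distrib, sum_sub_distrib, ← sum_mul,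
    sum_wbar_mul_sum_filter_mem ω p v hω, sum_ite_eq' N i, if_pos hi]
  field_simp
  rw [wbarSum]
  ring

end Recursion

section Orders

variable {β : Type*} [DecidableEq β] {n : ℕ}

def consEquiv (a : β) (τ : {x // x ≠ a} ≃ Fin n) : β ≃ Fin (n + 1) :=
  ((Equiv.optionSubtypeNe a).symm.trans τ.optionCongr).trans (finSuccEquiv n).symm

section

variable (a : β) (τ : {x // x ≠ a} ≃ Fin n)

@[simp] theorem consEquiv_self : consEquiv a τ a = 0 := by
  simp [consEquiv]

theorem consEquiv_of_ne {x : β} (hx : x ≠ a) : consEquiv a τ x = (τ ⟨x, hx⟩).succ := by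
  simp [consEquiv, Equiv.optionSubtypeNe_symm_of_ne hx]

theorem consEquiv_symm_zero : (consEquiv a τ).symm 0 = a := by
  rw [Equiv.symm_apply_eq, consEquiv_self]

theorem consEquiv_symm_succ (s : Fin n) : (consEquiv a τ).symm s.succ = τ.symm s := by
  rw [Equiv.symm_apply_eq, consEquiv_of_ne a τ (τ.symm s).2]
  simp

theorem filter_consEquiv [Fintype β] (P : Fin (n + 1) → Prop) [DecidablePred P] (h0 : ¬ P 0) :
    univ.filter (fun j => P (consEquiv a τ j)) =
      (univ.filter fun j => P (τ j).succ).map (Function.Embedding.subtype _) := by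
  ext x
  by_cases hx : x = a
  · subst hx; simp [h0]
  · simp [consEquiv_of_ne a τ hx, hx]

end

theorem succ_finSuccAboveEquiv_zero_symm (y : {y : Fin (n + 1) // y ≠ 0}) :
    ((finSuccAboveEquiv 0).symm y).succ = y :=
  congrArg Subtype.val ((finSuccAboveEquiv 0).apply_symm_apply y)

def consEquivEquiv (a : β) : ({x // x ≠ a} ≃ Fin n) ≃ {σ : β ≃ Fin (n + 1) // σ.symm 0 = a} where
  toFun τ := ⟨consEquiv a τ, consEquiv_symm_zero a τ⟩
  invFun σ := (σ.1.subtypeEquiv fun x => by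
    rw [ne_eq, ne_eq, ← Equiv.eq_symm_apply, σ.2]).trans
    (finSuccAboveEquiv 0).symm
  left_inv τ := by
    refine Equiv.ext fun x => ?_
    rw [Equiv.trans_apply, Equiv.symm_apply_eq]
    ext
    simp [consEquiv_of_ne a τ x.2, finSuccAboveEquiv_apply]
  right_inv := by
    rintro ⟨σ, rfl⟩
    refine Subtype.ext (Equiv.ext fun x => ?_)
    by_cases hx : x = σ.symm 0
    · rw [hx, consEquiv_self, Equiv.apply_symm_apply]
    · rw [consEquiv_of_ne _ _ hx]
      exact succ_finSuccAboveEquiv_zero_symm _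

theorem sum_equiv_fin_succ [Fintype β] {M : Type*} [AddCommMonoid M]
    (F : (β ≃ Fin (n + 1)) → M) :
    ∑ σ, F σ = ∑ a, ∑ τ : {x // x ≠ a} ≃ Fin n, F (consEquiv a τ) := by
  rw [← Fintype.sum_fiberwise (fun σ : β ≃ Fin (n + 1) => σ.symm 0) F]
  refine sum_congr rfl fun a _ => ?_
  exact (Equiv.sum_comp (consEquivEquiv a) fun σ => F σ.1).symm

end Orders

section Expectation

variable {β : Type*} [Fintype β] [DecidableEq β] (ω : β → ℝ) (p : β → ℕ) {n : ℕ}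

/-- `orderProb` for orders indexed by an arbitrary `Fin n`, so that one can induct on `n`. -/
def orderProb' (σ : β ≃ Fin n) : ℝ :=
  ∏ t : Fin n,
    wbar ω p (univ.filter fun j => t ≤ σ j) (σ.symm t) /
      wbarSum ω p (univ.filter fun j => t ≤ σ j)

def marginal (v : Finset β → ℝ) (σ : β ≃ Fin n) (i : β) : ℝ :=
  v (univ.filter fun j => σ i ≤ σ j) - v (univ.filter fun j => σ i < σ j)

theorem univ_map_subtype_ne (a : β) :
    univ.map (Function.Embedding.subtype (· ≠ a)) = univ.erase a := by
  rw [univ_map_subtype, filter_ne']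

theorem card_subtype_ne {a : β} (hn : Fintype.card β = n + 1) :
    Fintype.card {x // x ≠ a} = n := by
  rw [Fintype.card_subtype_compl, Fintype.card_subtype_eq, hn, Nat.add_sub_cancel]

theorem orderProb'_consEquiv (a : β) (τ : {x // x ≠ a} ≃ Fin n) :
    orderProb' ω p (consEquiv a τ) = wbar ω p univ a / wbarSum ω p univ *
      orderProb' (ω ∘ Function.Embedding.subtype _) (p ∘ Function.Embedding.subtype _) τ := by
  rw [orderProb', Fin.prod_univ_succ, consEquiv_symm_zero]
  congr 1
  · simp
  · refine prod_congr rfl fun s _ => ?_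
    rw [filter_consEquiv a τ _ (by simp), consEquiv_symm_succ]
    simp only [Fin.succ_le_succ_iff, wbar_comp_embedding, wbarSum_comp_embedding]
    rfl

theorem marginal_consEquiv_self (v : Finset β → ℝ) (a : β) (τ : {x // x ≠ a} ≃ Fin n) :
    marginal v (consEquiv a τ) a = v univ - v (univ.erase a) := by
  rw [marginal, consEquiv_self, filter_consEquiv a τ (0 < ·) (lt_irrefl 0)]
  simp [Fin.succ_pos, univ_map_subtype_ne]

theorem marginal_consEquiv_of_ne (v : Finset β → ℝ) {a i : β} (hi : i ≠ a)
    (τ : {x // x ≠ a} ≃ Fin n) :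
    marginal v (consEquiv a τ) i =
      marginal (fun U => v (U.map (Function.Embedding.subtype _))) τ ⟨i, hi⟩ := by
  simp only [marginal, consEquiv_of_ne a τ hi]
  rw [filter_consEquiv a τ _ (by simp), filter_consEquiv a τ _ (by simp)]
  simp only [Fin.succ_le_succ_iff, Fin.succ_lt_succ_iff]

theorem sum_orderProb'_eq_one (hω : ∀ i, 0 < ω i) (hn : Fintype.card β = n) :
    ∑ σ : β ≃ Fin n, orderProb' ω p σ = 1 := by
  induction n generalizing β with
  | zero =>
    have : IsEmpty β := Fintype.card_eq_zero_iff.mp hn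
    simp [orderProb', Fintype.card_equiv (Fintype.equivFinOfCardEq hn)]
  | succ n ih =>
    have : Nonempty β := Fintype.card_pos_iff.mp (by omega)
    have hfirst : ∀ a, ∑ τ : {x // x ≠ a} ≃ Fin n, orderProb' ω p (consEquiv a τ) =
        wbar ω p univ a / wbarSum ω p univ := fun a => by
      have := ih (ω ∘ Function.Embedding.subtype (· ≠ a)) (p ∘ Function.Embedding.subtype _)
        (fun x => hω x) (card_subtype_ne hn)
      simp only [orderProb'_consEquiv, ← mul_sum, this, mul_one]
    rw [sum_equiv_fin_succ, sum_congr rfl fun a _ => hfirst a, ← sum_div]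
    exact div_self (wbarSum_pos ω p hω univ_nonempty).ne'

theorem sum_orderProb'_mul_marginal (hω : ∀ i, 0 < ω i) (v : Finset β → ℝ)
    (hn : Fintype.card β = n) (i : β) :
    ∑ σ : β ≃ Fin n, orderProb' ω p σ * marginal v σ i = wShapley ω p v univ i := by
  induction n generalizing β with
  | zero => exact (Fintype.card_eq_zero_iff.mp hn).elim i
  | succ n ih =>
    have hfirst : ∀ a, ∑ τ : {x // x ≠ a} ≃ Fin n,
        orderProb' ω p (consEquiv a τ) * marginal v (consEquiv a τ) i =
        wbar ω p univ a / wbarSum ω p univ *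
          if a = i then v univ - v (univ.erase i) else wShapley ω p v (univ.erase a) i := by
      intro a
      have hω' : ∀ x, 0 < (ω ∘ Function.Embedding.subtype (· ≠ a)) x := fun x => hω x
      simp only [orderProb'_consEquiv, mul_assoc, ← mul_sum]
      congr 1
      split_ifs with hai
      · subst hai
        rw [sum_congr rfl fun τ _ => by rw [marginal_consEquiv_self], ← sum_mul,
          sum_orderProb'_eq_one _ _ hω' (card_subtype_ne hn), one_mul]
      · have hia : i ≠ a := Ne.symm hai
        simp only [marginal_consEquiv_of_ne v hia]
        rw [ih _ _ hω' _ (card_subtype_ne hn), wShapley_comp_embedding,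
          univ_map_subtype_ne]
        rfl
    rw [sum_equiv_fin_succ, sum_congr rfl fun a _ => hfirst a,
      wShapley_eq_sum_wbar_div_mul ω p v hω (mem_univ i)]

end Expectation

theorem expectation_orderProb_eq_weighted_shapley_general [Fintype α] [DecidableEq α]
    (ω : α → ℝ) (hω : ∀ i, 0 < ω i) (p : α → ℕ)
    (v : Finset α → ℝ) (i : α) :
    (∑ σ : α ≃ Fin (Fintype.card α),
        orderProb ω p σ *
          (v (Finset.univ.filter fun j => σ i ≤ σ j) -
            v (Finset.univ.filter fun j => σ i < σ j)))
      = wShapley ω p v Finset.univ i :=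
  sum_orderProb'_mul_marginal ω p hω v rfl i

/-- The expectation under `P_{ω,Σ}` of the marginal contribution
`v({j : σ j ≥ σ i}) − v({j : σ j > σ i})` equals the `(ω,Σ)`-weighted Shapley value `Φ^ω_i(v)`. -/
theorem expectation_orderProb_eq_weighted_shapley [Fintype α] [DecidableEq α]
    (ω : α → ℝ) (hω : ∀ i, 0 < ω i) (p : α → ℕ) (hp : ∀ i, 1 ≤ p i)
    (v : Finset α → ℝ) (hv : v ∅ = 0) (i : α) :
    (∑ σ : α ≃ Fin (Fintype.card α),
        orderProb ω p σ *
          (v (Finset.univ.filter fun j => σ i ≤ σ j) -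
            v (Finset.univ.filter fun j => σ i < σ j)))
      = wShapley ω p v Finset.univ i :=
  expectation_orderProb_eq_weighted_shapley_general ω hω p v i

end
end

section
/- Let G=(N,E) be a connected simple graph on a finite player set N. Then the following are equivalent: (1) G preserves average convexity, i.e., for every average convex TU-game (N,v) the communication game (N,v^G) is average convex; (2) for every weight system (ω,Σ) on N with Σ = (N) the trivial ordered partition, G preserves (ω,Σ)-convexity. -/
open Finset

variable {α : Type*}

noncomputable section

open scoped Classical

/-- `(ω,Σ)`-convexity of a TU-game `v`. -/
def WConvex [DecidableEq α] (ω : α → ℝ) (p : α → ℕ) (v : Finset α → ℝ) : Prop :=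
  ∀ S T : Finset α, S ⊂ T →
    0 ≤ ∑ i ∈ S, wbar ω p T i * (v T - v (T.erase i) - v S + v (S.erase i))

/-- The connected component of `i` in the subgraph of `G` induced by `S`. -/
def compOf [Fintype α] (G : SimpleGraph α) (S : Finset α) (i : α) : Finset α :=
  S.filter fun j => Relation.ReflTransGen (fun a b => a ∈ S ∧ b ∈ S ∧ G.Adj a b) i j

/-- The communication game `v^G`: `v^G(S)` is the sum of `v` over the (vertex sets of the)
connected components of the subgraph of `G` induced by `S`. -/
def commGame [Fintype α] [DecidableEq α] (G : SimpleGraph α)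
    (v : Finset α → ℝ) (S : Finset α) : ℝ :=
  ∑ A ∈ S.image (compOf G S), v A

/-- `G` preserves `(ω,Σ)`-convexity. -/
def Preserves [Fintype α] [DecidableEq α] (G : SimpleGraph α)
    (ω : α → ℝ) (p : α → ℕ) : Prop :=
  ∀ v : Finset α → ℝ, v ∅ = 0 → WConvex ω p v → WConvex ω p (commGame G v)

/-- average convexity of a TU-game `v`. -/
def AvgConvex [DecidableEq α] (v : Finset α → ℝ) : Prop :=
  ∀ S T : Finset α, S ⊂ T →
    ∑ i ∈ S, (v S - v (S.erase i)) ≤ ∑ i ∈ S, (v T - v (T.erase i))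

/-!
With the trivial partition, `(ω,Σ)`-convexity reads
`∑_{i ∈ S} ω_i (v(T) - v(T ∖ i) - v(S) + v(S ∖ i)) ≥ 0`, which for `ω ≡ 1` is average convexity;
this gives one direction.

Conversely, preserving average convexity passes to induced subgraphs, and a single explicit game
on four players shows that `P₄`, `C₄`, the paw and the diamond do not preserve it. A connected
graph without these induced subgraphs is complete or a star. A complete graph leaves every game
unchanged. For a star with centre `c`, `v^G` agrees with `v` on coalitions containing `c` and is
additive on the others; with positive weights, `(ω,Σ)`-convexity makes both `v(S) ≥ v(S ∖ j) + v(j)`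
and the monotonicity of `v(S) - ∑_{j ∈ S} v(j)`, which is what the star needs.
-/

open SimpleGraph

section TrivialPartition

variable [DecidableEq α] {ω : α → ℝ} {v : Finset α → ℝ}

lemma wbar_const_of_mem (ω : α → ℝ) (k : ℕ) {T : Finset α} {i : α} (hi : i ∈ T) :
    wbar ω (fun _ => k) T i = ω i := by
  rw [wbar, if_pos ⟨hi, (sup_const ⟨i, hi⟩ k).symm⟩]

lemma wConvex_const_iff (k : ℕ) :
    WConvex ω (fun _ => k) v ↔ ∀ S T : Finset α, S ⊂ T →
      0 ≤ ∑ i ∈ S, ω i * (v T - v (T.erase i) - v S + v (S.erase i)) := by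
  refine forall₂_congr fun S T => imp_congr_right fun hST => ?_
  rw [sum_congr rfl fun i hi => by rw [wbar_const_of_mem ω k (hST.subset hi)]]

lemma avgConvex_iff_wConvex_one (k : ℕ) :
    AvgConvex v ↔ WConvex (fun _ => 1) (fun _ => k) v := by
  rw [wConvex_const_iff]
  refine forall₂_congr fun S T => imp_congr_right fun _ => ?_
  rw [← sub_nonneg, ← sum_sub_distrib]
  exact iff_of_eq (congrArg _ (sum_congr rfl fun _ _ => by ring))

variable {k : ℕ} (hω : ∀ i, 0 < ω i) (hv0 : v ∅ = 0) (hv : WConvex ω (fun _ => k) v)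
include hω hv0 hv

lemma WConvex.singleton_add_erase_le {j : α} {X : Finset α} (hj : j ∈ X) :
    v {j} + v (X.erase j) ≤ v X := by
  rcases eq_or_ne X {j} with rfl | hX
  · simp [hv0]
  have hjX : {j} ⊂ X := (singleton_subset_iff.2 hj).ssubset_of_ne (Ne.symm hX)
  have := (wConvex_const_iff k).1 hv _ _ hjX
  rw [sum_singleton, erase_singleton, hv0] at this
  nlinarith [hω j]

lemma WConvex.sub_sum_singleton_mono {S X : Finset α} (hSX : S ⊆ X) :
    v S - ∑ j ∈ S, v {j} ≤ v X - ∑ j ∈ X, v {j} := by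
  obtain ⟨D, hD, rfl⟩ : ∃ D, Disjoint S D ∧ X = S ∪ D :=
    ⟨X \ S, disjoint_sdiff, (union_sdiff_of_subset hSX).symm⟩
  clear hSX
  induction D using Finset.induction_on with
  | empty => simp
  | insert j D hjD ih =>
    rw [disjoint_insert_right] at hD
    have hj : j ∉ S ∪ D := by simp [hjD, hD.1]
    have hstep := hv.singleton_add_erase_le hω hv0 (mem_insert_self j (S ∪ D))
    rw [erase_insert hj] at hstep
    rw [union_insert, sum_insert hj]
    linarith [ih hD.2]

end TrivialPartition

lemma Relation.ReflTransGen.exists_boundary {β : Type*} {r : β → β → Prop} {p : β → Prop}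
    {a b : β} (h : Relation.ReflTransGen r a b) (ha : p a) (hb : ¬ p b) :
    ∃ x y, p x ∧ ¬ p y ∧ r x y ∧ Relation.ReflTransGen r a y := by
  induction h with
  | refl => exact absurd ha hb
  | @tail y z hay hyz ih =>
    by_cases hy : p y
    · exact ⟨y, z, hy, hb, hyz, hay.tail hyz⟩
    · exact ih hy

section Components

variable [Fintype α] {G : SimpleGraph α} {X A : Finset α} {i j : α}

abbrev AdjIn (G : SimpleGraph α) (X : Finset α) (a b : α) : Prop :=
  a ∈ X ∧ b ∈ X ∧ G.Adj a b

instance : Std.Symm (AdjIn G X) := ⟨fun _ _ h => ⟨h.2.1, h.1, h.2.2.symm⟩⟩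

lemma mem_compOf : j ∈ compOf G X i ↔ j ∈ X ∧ Relation.ReflTransGen (AdjIn G X) i j :=
  mem_filter

lemma self_mem_compOf (hi : i ∈ X) : i ∈ compOf G X i :=
  mem_compOf.2 ⟨hi, .refl⟩

variable [DecidableEq α]

/-- `A` is a connected component of the subgraph of `G` induced by `X`; connectivity is phrased
through cuts so that the predicate is decidable. -/
def IsComponentIn (G : SimpleGraph α) (X A : Finset α) : Prop :=
  A.Nonempty ∧ A ⊆ X ∧ (∀ a ∈ A, ∀ b ∈ X, G.Adj a b → b ∈ A) ∧
    ∀ B ∈ A.ssubsets, B.Nonempty → ∃ a ∈ B, ∃ b ∈ A \ B, G.Adj a b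

instance [DecidableRel G.Adj] : DecidablePred (IsComponentIn G X) := fun _ => by
  unfold IsComponentIn; infer_instance

lemma compOf_eq_of_isComponentIn (hA : IsComponentIn G X A) (hi : i ∈ A) :
    compOf G X i = A := by
  obtain ⟨-, hAX, hclosed, hcut⟩ := hA
  have hreach : ∀ j, Relation.ReflTransGen (AdjIn G X) i j → j ∈ A := fun j h => by
    induction h with
    | refl => exact hi
    | tail _ hyz ih => exact hclosed _ ih _ hyz.2.1 hyz.2.2
  have hsub : compOf G X i ⊆ A := fun j hj => hreach j (mem_compOf.1 hj).2
  by_contra hne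
  obtain ⟨x, hx, y, hy, hxy⟩ :=
    hcut _ (mem_ssubsets.2 (hsub.ssubset_of_ne hne)) ⟨i, self_mem_compOf (hAX hi)⟩
  obtain ⟨hyA, hy⟩ := mem_sdiff.1 hy
  exact hy (mem_compOf.2 ⟨hAX hyA, (mem_compOf.1 hx).2.tail ⟨hAX (hsub hx), hAX hyA, hxy⟩⟩)

lemma isComponentIn_compOf (hi : i ∈ X) : IsComponentIn G X (compOf G X i) := by
  refine ⟨⟨i, self_mem_compOf hi⟩, filter_subset _ _, fun a ha b hb hab => ?_,
    fun B hB ⟨b, hb⟩ => ?_⟩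
  · exact mem_compOf.2 ⟨hb, (mem_compOf.1 ha).2.tail ⟨(mem_compOf.1 ha).1, hb, hab⟩⟩
  rw [mem_ssubsets] at hB
  obtain ⟨a, ha, haB⟩ := exists_of_ssubset hB
  have hib := (mem_compOf.1 (hB.subset hb)).2
  obtain ⟨x, y, hx, hy, hxy, hby⟩ :=
    ((Std.Symm.symm _ _ hib).trans (mem_compOf.1 ha).2).exists_boundary (p := (· ∈ B)) hb haB
  exact ⟨x, hx, y, mem_sdiff.2 ⟨mem_compOf.2 ⟨hxy.2.1, hib.trans hby⟩, hy⟩, hxy.2.2⟩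

end Components

section CommGame

variable [Fintype α] [DecidableEq α] {G : SimpleGraph α} {X : Finset α} {v : Finset α → ℝ}

lemma image_compOf_eq_filter [DecidableRel G.Adj] (X : Finset α) :
    X.image (compOf G X) = X.powerset.filter (IsComponentIn G X) := by
  ext A
  simp only [mem_image, mem_filter, mem_powerset]
  constructor
  · rintro ⟨i, hi, rfl⟩
    exact ⟨filter_subset _ _, isComponentIn_compOf hi⟩
  · rintro ⟨-, hA⟩
    obtain ⟨i, hi⟩ := hA.1
    exact ⟨i, hA.2.1 hi, compOf_eq_of_isComponentIn hA hi⟩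

lemma commGame_eq_self_of_isComponentIn (h : IsComponentIn G X X) : commGame G v X = v X := by
  rw [commGame, image_congr fun i hi => compOf_eq_of_isComponentIn h hi, image_const h.1,
    sum_singleton]

lemma commGame_eq_sum_singleton (h : ∀ a ∈ X, ∀ b ∈ X, ¬ G.Adj a b) :
    commGame G v X = ∑ i ∈ X, v {i} := by
  have hcomp : ∀ i ∈ X, compOf G X i = {i} := fun i hi =>
    compOf_eq_of_isComponentIn ⟨singleton_nonempty i, singleton_subset_iff.2 hi,
      fun a ha b hb hab => absurd hab (h a (mem_singleton.1 ha ▸ hi) b hb),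
      fun B hB hne => absurd (ssubset_singleton_iff.1 (mem_ssubsets.1 hB)) hne.ne_empty⟩
      (mem_singleton_self i)
  rw [commGame, image_congr hcomp, sum_image fun _ _ _ _ h => singleton_injective h]

lemma commGame_empty : commGame G v ∅ = 0 := by
  simp [commGame]

lemma commGame_top (hv0 : v ∅ = 0) : commGame ⊤ v = v := by
  funext X
  rcases X.eq_empty_or_nonempty with rfl | hX
  · rw [commGame_empty, hv0]
  refine commGame_eq_self_of_isComponentIn ⟨hX, subset_rfl, fun _ _ _ hb _ => hb,
    fun B hB ⟨a, ha⟩ => ?_⟩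
  obtain ⟨b, hb, hbB⟩ := exists_of_ssubset (mem_ssubsets.1 hB)
  exact ⟨a, ha, b, mem_sdiff.2 ⟨hb, hbB⟩, fun hab => hbB (hab ▸ ha)⟩

lemma commGame_starGraph_of_mem {c : α} (hc : c ∈ X) : commGame (starGraph c) v X = v X := by
  refine commGame_eq_self_of_isComponentIn ⟨⟨c, hc⟩, subset_rfl, fun _ _ _ hb _ => hb,
    fun B hB ⟨a, ha⟩ => ?_⟩
  rw [mem_ssubsets] at hB
  by_cases hcB : c ∈ B
  · obtain ⟨b, hb, hbB⟩ := exists_of_ssubset hB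
    exact ⟨c, hcB, b, mem_sdiff.2 ⟨hb, hbB⟩, starGraph_center_adj fun h => hbB (h ▸ hcB)⟩
  · exact ⟨a, ha, c, mem_sdiff.2 ⟨hc, hcB⟩, starGraph_center_adj' fun h => hcB (h ▸ ha)⟩

lemma commGame_starGraph_of_not_mem {c : α} (hc : c ∉ X) :
    commGame (starGraph c) v X = ∑ i ∈ X, v {i} :=
  commGame_eq_sum_singleton fun a ha b hb hab => by
    rcases (starGraph_adj.1 hab).2 with rfl | rfl
    exacts [hc ha, hc hb]

end CommGame

section Preservation

variable [Fintype α] [DecidableEq α]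

lemma preserves_top (ω : α → ℝ) (p : α → ℕ) : Preserves ⊤ ω p := fun v hv0 hv => by
  rwa [commGame_top hv0]

lemma preserves_starGraph {ω : α → ℝ} (hω : ∀ i, 0 < ω i) (k : ℕ) (c : α) :
    Preserves (starGraph c) ω (fun _ => k) := by
  intro v hv0 hv
  rw [wConvex_const_iff]
  intro S T hST
  set w := commGame (starGraph c) v
  have hin : ∀ {Y}, c ∈ Y → w Y = v Y := commGame_starGraph_of_mem
  have hout : ∀ {Y}, c ∉ Y → w Y = ∑ i ∈ Y, v {i} := commGame_starGraph_of_not_mem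
  have hsum_erase : ∀ {Y : Finset α} {i}, i ∈ Y →
      ∑ j ∈ Y, v {j} - ∑ j ∈ Y.erase i, v {j} = v {i} :=
    fun hi => by rw [← sum_erase_add _ _ hi]; ring
  by_cases hcT : c ∈ T
  swap
  · have hcS : c ∉ S := fun h => hcT (hST.subset h)
    refine (sum_eq_zero fun i hi => mul_eq_zero_of_right _ ?_).ge
    rw [hout hcT, hout hcS, hout fun h => hcT (mem_of_mem_erase h),
      hout fun h => hcS (mem_of_mem_erase h)]
    linarith [hsum_erase hi, hsum_erase (hST.subset hi)]
  by_cases hcS : c ∉ S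
  · refine sum_nonneg fun i hi => mul_nonneg (hω i).le ?_
    have hic : c ≠ i := fun h => hcS (h ▸ hi)
    rw [hin hcT, hin (mem_erase_of_ne_of_mem hic hcT), hout hcS,
      hout fun h => hcS (mem_of_mem_erase h)]
    linarith [hsum_erase hi, hv.singleton_add_erase_le hω hv0 (hST.subset hi)]
  rw [not_not] at hcS
  have hvST := (wConvex_const_iff k).1 hv S T hST
  rw [← sum_erase_add _ _ hcS] at hvST ⊢
  rw [sum_congr rfl fun i hi => by
    rw [hin hcT, hin hcS, hin (mem_erase_of_ne_of_mem (ne_of_mem_erase hi).symm hcT),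
      hin (mem_erase_of_ne_of_mem (ne_of_mem_erase hi).symm hcS)]]
  rw [hin hcT, hin hcS, hout (notMem_erase c T), hout (notMem_erase c S)]
  have hmono := hv.sub_sum_singleton_mono hω hv0 (erase_subset_erase c hST.subset)
  nlinarith [mul_nonneg (hω c).le (sub_nonneg.2 hmono)]

end Preservation

section InducedSubgraph

variable {β : Type*} {G : SimpleGraph α} {H : SimpleGraph β}

def PreservesAvgConvex [Fintype α] [DecidableEq α] (G : SimpleGraph α) : Prop :=
  ∀ v : Finset α → ℝ, v ∅ = 0 → AvgConvex v → AvgConvex (commGame G v)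

lemma reflTransGen_adjIn_map_iff (f : H ↪g G) {X : Finset β} {i j : β} :
    Relation.ReflTransGen (AdjIn G (X.map f.toEmbedding)) (f i) (f j) ↔
      Relation.ReflTransGen (AdjIn H X) i j := by
  refine ⟨fun h => ?_, fun h => h.lift f fun a b hab => ⟨mem_map_of_mem _ hab.1,
    mem_map_of_mem _ hab.2.1, f.map_adj_iff.2 hab.2.2⟩⟩
  suffices ∀ y, Relation.ReflTransGen (AdjIn G (X.map f.toEmbedding)) (f i) y →
      ∀ j, f j = y → Relation.ReflTransGen (AdjIn H X) i j from this _ h j rfl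
  intro y hy
  induction hy with
  | refl => exact fun j hj => f.injective hj ▸ .refl
  | tail _ hyz ih =>
    intro j hj
    obtain ⟨k, hk, rfl⟩ := mem_map.1 hyz.1
    subst hj
    exact (ih k rfl).tail ⟨hk, (mem_map' _).1 hyz.2.1, f.map_adj_iff.1 hyz.2.2⟩

lemma compOf_map [Fintype α] [Fintype β] (f : H ↪g G) (X : Finset β) (i : β) :
    compOf G (X.map f.toEmbedding) (f i) = (compOf H X i).map f.toEmbedding := by
  ext y
  simp only [mem_compOf, mem_map]
  constructor
  · rintro ⟨⟨j, hj, rfl⟩, h⟩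
    exact ⟨j, ⟨hj, (reflTransGen_adjIn_map_iff f).1 h⟩, rfl⟩
  · rintro ⟨j, ⟨hj, h⟩, rfl⟩
    exact ⟨⟨j, hj, rfl⟩, (reflTransGen_adjIn_map_iff f).2 h⟩

variable [DecidableEq α]

lemma preimage_erase_of_notMem_range (e : β ↪ α) (R : Finset α) {i : α}
    (hi : i ∉ Set.range e) :
    (R.erase i).preimage e e.injective.injOn = R.preimage e e.injective.injOn := by
  ext b
  simp only [mem_preimage, mem_erase, and_iff_right_iff_imp]
  exact fun _ h => hi ⟨b, h⟩

lemma AvgConvex.le_of_subset {v : Finset α → ℝ} (hv : AvgConvex v) {S T : Finset α}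
    (hST : S ⊆ T) : ∑ i ∈ S, (v S - v (S.erase i)) ≤ ∑ i ∈ S, (v T - v (T.erase i)) := by
  rcases hST.eq_or_ssubset with rfl | hST
  exacts [le_rfl, hv S T hST]

variable [DecidableEq β]

lemma preimage_erase_apply (e : β ↪ α) (R : Finset α) (b : β) :
    (R.erase (e b)).preimage e e.injective.injOn = (R.preimage e e.injective.injOn).erase b := by
  ext
  simp [e.injective.ne_iff]

lemma sum_sub_preimage_erase (e : β ↪ α) (u : Finset β → ℝ) (S R : Finset α) :
    ∑ i ∈ S, (u (R.preimage e e.injective.injOn) - u ((R.erase i).preimage e e.injective.injOn)) =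
      ∑ b ∈ S.preimage e e.injective.injOn,
        (u (R.preimage e e.injective.injOn) - u ((R.preimage e e.injective.injOn).erase b)) := by
  rw [← sum_filter_of_ne (p := (· ∈ Set.range e)) fun i _ hi => by_contra fun h => hi
    (by rw [preimage_erase_of_notMem_range e R h, sub_self]),
    ← image_preimage e S e.injective.injOn, sum_image fun _ _ _ _ h => e.injective h]
  simp only [preimage_erase_apply]

lemma AvgConvex.preimage {u : Finset β → ℝ} (hu : AvgConvex u) (e : β ↪ α) :
    AvgConvex fun X => u (X.preimage e e.injective.injOn) := fun S T hST => by
  simp only [sum_sub_preimage_erase]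
  exact hu.le_of_subset (monotone_preimage e.injective hST.subset)

variable [Fintype α] [Fintype β]

lemma commGame_map (f : H ↪g G) (v : Finset α → ℝ) (X : Finset β) :
    commGame G v (X.map f.toEmbedding) = commGame H (fun A => v (A.map f.toEmbedding)) X := by
  have : (X.map f.toEmbedding).image (compOf G (X.map f.toEmbedding)) =
      (X.image (compOf H X)).image (map f.toEmbedding) := by
    ext A
    simp [compOf_map]
  rw [commGame, commGame, this, sum_image fun _ _ _ _ h => Finset.map_injective _ h]

lemma PreservesAvgConvex.of_isIndContained (hG : PreservesAvgConvex G) (h : H ⊴ G) :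
    PreservesAvgConvex H := by
  obtain ⟨f⟩ := h
  intro u hu0 hu S T hST
  have hv : ∀ A, u ((A.map f.toEmbedding).preimage f.toEmbedding
      f.toEmbedding.injective.injOn) = u A := fun A => by rw [preimage_map]
  have := hG _ (by simpa using hu0) (hu.preimage f.toEmbedding) (S.map f.toEmbedding)
    (T.map f.toEmbedding) (map_ssubset_map.2 hST)
  simpa only [sum_map, ← map_erase, commGame_map, hv] using this

end InducedSubgraph

section FourVertices

lemma avgConvex_intCast_iff [DecidableEq α] {g : Finset α → ℤ} :
    AvgConvex (fun X => (g X : ℝ)) ↔ ∀ S T : Finset α, S ⊂ T →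
      ∑ i ∈ S, (g S - g (S.erase i)) ≤ ∑ i ∈ S, (g T - g (T.erase i)) :=
  forall₂_congr fun _ _ => imp_congr_right fun _ => by dsimp only; norm_cast

lemma commGame_intCast [Fintype α] [DecidableEq α] {G : SimpleGraph α} [DecidableRel G.Adj]
    (g : Finset α → ℤ) : commGame G (fun X => (g X : ℝ)) =
      fun X => ((∑ A ∈ X.powerset.filter (IsComponentIn G X), g A : ℤ) : ℝ) := by
  funext X
  rw [commGame, image_compOf_eq_filter, Int.cast_sum]

def pathPlus (C : List (Fin 4 × Fin 4)) : SimpleGraph (Fin 4) :=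
  fromRel fun i j => i.val + 1 = j.val ∨ (i, j) ∈ C

instance (C : List (Fin 4 × Fin 4)) : DecidableRel (pathPlus C).Adj := fun _ _ => by
  unfold pathPlus; infer_instance

/-- `P₄`, `C₄`, the paw and the diamond, as the path `0 - 1 - 2 - 3` plus chords: the connected
graphs on four vertices other than `K₄` and the star `K₁,₃`. -/
def obstructionChords : List (List (Fin 4 × Fin 4)) :=
  [[], [(0, 3)], [(1, 3)], [(0, 3), (1, 3)]]

def obstructionGame (X : Finset (Fin 4)) : ℤ :=
  match decide (0 ∈ X), decide (1 ∈ X), decide (2 ∈ X), decide (3 ∈ X) with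
  | true, true, false, false => 8
  | true, false, true, false => 10
  | false, true, true, false => 10
  | false, false, true, true => 8
  | true, true, true, false => 19
  | true, true, false, true => 9
  | true, false, true, true => 14
  | false, true, true, true => 14
  | true, true, true, true => 22
  | _, _, _, _ => 0

theorem not_preservesAvgConvex_pathPlus :
    ∀ C ∈ obstructionChords, ¬ PreservesAvgConvex (pathPlus C) := by
  intro C hC hpres
  have key := hpres (fun X => (obstructionGame X : ℝ)) (by simp [obstructionGame])
    (avgConvex_intCast_iff.2 (by decide +kernel))
  rw [commGame_intCast, avgConvex_intCast_iff] at key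
  have hfail := key {0, 1, 2} univ (by decide)
  clear key hpres
  revert C
  decide +kernel

end FourVertices

section Classification

variable {β : Type*} {G : SimpleGraph α} {a b c e : α}

structure IsInducedPath3 (G : SimpleGraph α) (a c b : α) : Prop where
  adj_left : G.Adj a c
  adj_right : G.Adj c b
  not_adj : ¬ G.Adj a b
  ne : a ≠ b

lemma isIndContained_of_adj_iff {H : SimpleGraph β} (p : β → α) (hp : p.Injective)
    (hadj : ∀ i j, G.Adj (p i) (p j) ↔ H.Adj i j) : H ⊴ G :=
  ⟨⟨⟨p, hp⟩, hadj _ _⟩⟩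

lemma IsInducedPath3.not_adj_of_free (hfree : ∀ C ∈ obstructionChords, ¬ pathPlus C ⊴ G)
    (h : IsInducedPath3 G a c b) (hea : e ≠ a) (heb : e ≠ b) (hec : e ≠ c) : ¬ G.Adj e a := by
  intro hadj
  obtain ⟨hac, hcb, hab, hne⟩ := h
  have hac' := hac.ne
  have hcb' := hcb.ne
  -- According to the adjacency of `e` to `b` and `c`, the vertices `a, c, b, e` induce a diamond,
  -- a `C₄`, a paw or a `P₄`.
  rcases em (G.Adj b e) with hbe | hbe <;> rcases em (G.Adj c e) with hce | hce
  case' inl.inl =>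
    refine hfree [(0, 3), (1, 3)] (by decide) (isIndContained_of_adj_iff ![a, c, b, e] ?_ ?_)
  case' inl.inr =>
    refine hfree [(0, 3)] (by decide) (isIndContained_of_adj_iff ![a, c, b, e] ?_ ?_)
  case' inr.inl =>
    refine hfree [(1, 3)] (by decide) (isIndContained_of_adj_iff ![b, c, a, e] ?_ ?_)
  case' inr.inr =>
    refine hfree [] (by decide) (isIndContained_of_adj_iff ![e, a, c, b] ?_ ?_)
  all_goals first
    | (simp [Function.Injective, Fin.forall_fin_succ, hac', hcb', hne, hea, heb, hec, hac'.symm,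
        hcb'.symm, hne.symm, hea.symm, heb.symm, hec.symm]; done)
    | intro i j
      fin_cases i <;> fin_cases j <;> simp [pathPlus, hac, hcb, hab, hadj, hbe, hce,
        G.adj_comm c a, G.adj_comm b c, G.adj_comm b a, G.adj_comm a e, G.adj_comm e b,
        G.adj_comm e c]

lemma IsInducedPath3.exists_of_adj (hfree : ∀ C ∈ obstructionChords, ¬ pathPlus C ⊴ G)
    (h : IsInducedPath3 G a c b) {x : α} (hx : G.Adj c x) : ∃ z, IsInducedPath3 G x c z := by
  by_cases hxa : x = a
  · exact ⟨b, hxa ▸ h⟩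
  refine ⟨a, hx.symm, h.adj_left.symm, fun hax => ?_, hxa⟩
  by_cases hxb : x = b
  · exact h.not_adj (hxb ▸ hax.symm)
  · exact h.not_adj_of_free hfree hxa hxb hx.ne.symm hax

theorem eq_top_or_eq_starGraph_of_connected (hG : G.Connected)
    (hfree : ∀ C ∈ obstructionChords, ¬ pathPlus C ⊴ G) : G = ⊤ ∨ ∃ c, G = starGraph c := by
  refine or_iff_not_imp_left.2 fun htop => ?_
  obtain ⟨x, y, hxy, hnxy⟩ := ne_top_iff_exists_not_adj.1 htop
  obtain ⟨p, hp⟩ := hG.exists_walk_length_eq_dist x y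
  obtain ⟨a, c, b, hac, hcb, hab, hne⟩ :=
    p.exists_adj_adj_not_adj_ne hp ((hG x y).one_lt_dist_of_ne_of_not_adj hxy hnxy)
  have hend : ∀ x, G.Adj c x → ∃ z, IsInducedPath3 G x c z :=
    fun _ => IsInducedPath3.exists_of_adj hfree ⟨hac, hcb, hab, hne⟩
  have huniv : ∀ u, c ≠ u → G.Adj c u := by
    intro u hcu
    by_contra hnu
    obtain ⟨d, -, hd, hd'⟩ := (hG c u).some.exists_boundary_dart {x | x = c ∨ G.Adj c x}
      (Or.inl rfl) (by simp [hcu.symm, hnu])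
    simp only [Set.mem_ofPred_eq, not_or] at hd hd'
    rcases hd with hd | hd
    · exact hd'.2 (hd ▸ d.adj)
    obtain ⟨z, hz⟩ := hend _ hd
    exact hz.not_adj_of_free hfree d.adj.ne.symm (fun h => hd'.2 (h ▸ hz.adj_right)) hd'.1
      d.adj.symm
  refine ⟨c, ?_⟩
  ext u w
  rw [starGraph_adj]
  refine ⟨fun huw => ⟨huw.ne, ?_⟩, ?_⟩
  · by_contra! hne
    obtain ⟨z, hz⟩ := hend u (huniv u hne.1.symm)
    by_cases hwz : w = z
    · exact hz.not_adj (hwz ▸ huw)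
    · exact hz.not_adj_of_free hfree huw.ne.symm hwz hne.2 huw.symm
  · rintro ⟨huw, rfl | rfl⟩
    exacts [huniv w huw, (huniv u huw.symm).symm]

end Classification

/-- For a connected graph `G`, preserving average convexity is equivalent to preserving
`(ω,Σ)`-convexity for every weight system with the trivial ordered partition `Σ = (N)`
(all priorities equal to `1`). -/
theorem preserves_avgConvex_iff_preserves_all_trivial_weight_systems
    [Fintype α] [DecidableEq α] (G : SimpleGraph α) (hG : G.Connected) :
    (∀ v : Finset α → ℝ, v ∅ = 0 → AvgConvex v → AvgConvex (commGame G v)) ↔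
      (∀ ω : α → ℝ, (∀ i, 0 < ω i) → Preserves G ω (fun _ => 1)) := by
  constructor
  · intro hAC ω hω
    have hfree : ∀ C ∈ obstructionChords, ¬ pathPlus C ⊴ G := fun C hC hCG =>
      not_preservesAvgConvex_pathPlus C hC (PreservesAvgConvex.of_isIndContained hAC hCG)
    rcases eq_top_or_eq_starGraph_of_connected hG hfree with rfl | ⟨c, rfl⟩
    · exact preserves_top ω _
    · exact preserves_starGraph hω 1 c
  · intro h v hv0 hv
    rw [avgConvex_iff_wConvex_one 1] at hv ⊢
    exact h _ (fun _ => one_pos) v hv0 hv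

end
end

section
/- Let (ω,Σ) be a weight system on a finite player set N and let G=(N,E) be a graph preserving (ω,Σ)-convexity. Let C be a cycle in G and let j be a vertex of C whose priority equals the maximal priority among the vertices of C, i.e., p(j) = p(V(C)). If i and k are the two neighbors of j on the cycle C, then {i,k} ∈ E. -/
open Finset

variable {α : Type*}

noncomputable section

open scoped Classical

/-! Suppose `i = c.snd` and `k = c.penultimate` are not adjacent. The unanimity game of `{i, k}`
is supermodular, hence `(ω,Σ)`-convex, and its communication game is the indicator of `i` and `k`
being connected in the induced subgraph. Test the convexity of the latter on
`S = {j, i, k} ⊂ T = V(C)`: the terms of `i` and `k` vanish, and since `j` has top priority in `T`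
the term of `j` is `ω j * (1 - 1 - 1 + 0) < 0`, because the rest of the cycle connects `i` to `k`
in `T \ {j}` while nothing does in `{i, k}`. A cycle of length 3 is a triangle. -/

open Finset Relation

section Unanimity

variable [DecidableEq α]

lemma wbar_nonneg {ω : α → ℝ} (hω : ∀ i, 0 ≤ ω i) (p : α → ℕ) (S : Finset α) (i : α) :
    0 ≤ wbar ω p S i := by
  unfold wbar
  split_ifs
  exacts [hω i, le_rfl]

lemma wbar_eq_of_forall_le {ω : α → ℝ} {p : α → ℕ} {S : Finset α} {j : α} (hj : j ∈ S)
    (hmax : ∀ x ∈ S, p x ≤ p j) : wbar ω p S j = ω j :=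
  if_pos ⟨hj, le_antisymm (le_sup hj) (Finset.sup_le hmax)⟩

lemma wConvex_of_marginal_mono {ω : α → ℝ} (hω : ∀ i, 0 ≤ ω i) (p : α → ℕ)
    {v : Finset α → ℝ}
    (hv : ∀ S T : Finset α, S ⊆ T → ∀ i ∈ S, v S - v (S.erase i) ≤ v T - v (T.erase i)) :
    WConvex ω p v := fun S T hST =>
  sum_nonneg fun i hi =>
    mul_nonneg (wbar_nonneg hω p T i) (by linarith [hv S T hST.subset i hi])

def unanimity (A B : Finset α) : ℝ :=
  if A ⊆ B then 1 else 0

lemma unanimity_empty {A : Finset α} (hA : A.Nonempty) : unanimity A ∅ = 0 :=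
  if_neg fun h => hA.ne_empty (subset_empty.1 h)

lemma unanimity_sub_unanimity_erase (A B : Finset α) (i : α) :
    unanimity A B - unanimity A (B.erase i) = if A ⊆ B ∧ i ∈ A then 1 else 0 := by
  unfold unanimity
  by_cases hAB : A ⊆ B <;> by_cases hiA : i ∈ A <;> simp [hAB, hiA, subset_erase]

lemma wConvex_unanimity {ω : α → ℝ} (hω : ∀ i, 0 ≤ ω i) (p : α → ℕ) (A : Finset α) :
    WConvex ω p (unanimity A) := by
  refine wConvex_of_marginal_mono hω p fun S T hST i _ => ?_
  simp only [unanimity_sub_unanimity_erase]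
  split_ifs with hS hT
  exacts [le_rfl, absurd ⟨hS.1.trans hST, hS.2⟩ hT, zero_le_one, le_rfl]

end Unanimity

section Components

variable (G : SimpleGraph α)

def inducedAdj (S : Finset α) (a b : α) : Prop :=
  a ∈ S ∧ b ∈ S ∧ G.Adj a b

variable {G}

instance (S : Finset α) : Std.Symm (inducedAdj G S) :=
  ⟨fun _ _ ⟨ha, hb, h⟩ => ⟨hb, ha, h.symm⟩⟩

lemma inducedAdj_mono {S T : Finset α} (hST : S ⊆ T) : inducedAdj G S ≤ inducedAdj G T :=
  fun _ _ ⟨ha, hb, h⟩ => ⟨hST ha, hST hb, h⟩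

lemma mem_of_reflTransGen_inducedAdj {S : Finset α} {x y : α}
    (h : ReflTransGen (inducedAdj G S) x y) (hxy : x ≠ y) : x ∈ S ∧ y ∈ S := by
  obtain rfl | ⟨_, ⟨hx, _⟩, _⟩ := h.cases_head
  · exact absurd rfl hxy
  obtain rfl | ⟨_, _, ⟨_, hy, _⟩⟩ := h.cases_tail
  · exact absurd rfl hxy
  exact ⟨hx, hy⟩

lemma adj_of_reflTransGen_inducedAdj_pair [DecidableEq α] {i k : α} (hik : i ≠ k)
    (h : ReflTransGen (inducedAdj G {i, k}) i k) : G.Adj i k := by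
  obtain rfl | ⟨b, ⟨_, hb, hib⟩, _⟩ := h.cases_head
  · exact absurd rfl hik
  obtain rfl | hb := mem_insert.1 hb
  · exact absurd rfl hib.ne
  · rwa [mem_singleton.1 hb] at hib

lemma reflTransGen_inducedAdj_getVert {u v : α} (w : G.Walk u v) {S : Finset α} {a b : ℕ}
    (hab : a ≤ b) (hb : b ≤ w.length) (hS : ∀ m, a ≤ m → m ≤ b → w.getVert m ∈ S) :
    ReflTransGen (inducedAdj G S) (w.getVert a) (w.getVert b) := by
  induction b, hab using Nat.le_induction with
  | base => exact .refl
  | succ b hab ih =>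
    refine (ih (by omega) fun m h1 h2 => hS m h1 (by omega)).tail
      ⟨hS b hab (by omega), hS (b + 1) (by omega) le_rfl, w.adj_getVert_succ (by omega)⟩

section Fintype

variable [Fintype α]

lemma mem_compOf_s9 {S : Finset α} {i x : α} :
    x ∈ compOf G S i ↔ x ∈ S ∧ ReflTransGen (inducedAdj G S) i x :=
  mem_filter

lemma compOf_subset (S : Finset α) (i : α) : compOf G S i ⊆ S :=
  filter_subset _ _

lemma mem_compOf_self {S : Finset α} {i : α} (hi : i ∈ S) : i ∈ compOf G S i :=
  mem_compOf_s9.2 ⟨hi, .refl⟩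

lemma compOf_eq_of_mem {S : Finset α} {i x : α} (hx : x ∈ compOf G S i) :
    compOf G S x = compOf G S i := by
  have hix := (mem_compOf_s9.1 hx).2
  have hxi := Std.Symm.symm _ _ hix
  ext y
  simp only [mem_compOf_s9]
  exact and_congr_right fun _ => ⟨hix.trans, hxi.trans⟩

lemma commGame_unanimity [DecidableEq α] {A : Finset α} {a : α} (ha : a ∈ A)
    (B : Finset α) :
    commGame G (unanimity A) B = if A ⊆ compOf G B a then 1 else 0 := by
  unfold commGame
  refine sum_eq_single (compOf G B a) (fun C hC hne => ?_) fun hnot => ?_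
  · obtain ⟨x, -, rfl⟩ := mem_image.1 hC
    exact if_neg fun hA => hne (compOf_eq_of_mem (hA ha)).symm
  · exact if_neg fun hA => hnot (mem_image_of_mem _ (compOf_subset B a (hA ha)))

lemma commGame_unanimity_pair [DecidableEq α] {i k : α} (hik : i ≠ k) (B : Finset α) :
    commGame G (unanimity {i, k}) B = if ReflTransGen (inducedAdj G B) i k then 1 else 0 := by
  rw [commGame_unanimity (mem_insert_self i {k})]
  refine if_congr ?_ rfl rfl
  rw [insert_subset_iff, singleton_subset_iff]
  refine ⟨fun h => (mem_compOf_s9.1 h.2).2, fun h => ?_⟩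
  have hB := mem_of_reflTransGen_inducedAdj h hik
  exact ⟨mem_compOf_self hB.1, mem_compOf_s9.2 ⟨hB.2, h⟩⟩

end Fintype

end Components

lemma SimpleGraph.Walk.IsCycle.insert_snd_penultimate_ssubset [DecidableEq α]
    {G : SimpleGraph α} {u : α} {c : G.Walk u u} (hc : c.IsCycle) (hlen : 4 ≤ c.length) :
    insert u {c.snd, c.penultimate} ⊂ c.support.toFinset := by
  refine (ssubset_iff_of_subset ?_).2
    ⟨c.getVert 2, List.mem_toFinset.2 (c.getVert_mem_support 2), ?_⟩
  · simp only [insert_subset_iff, singleton_subset_iff, List.mem_toFinset]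
    exact ⟨c.start_mem_support, c.getVert_mem_support _, c.getVert_mem_support _⟩
  simp only [mem_insert, mem_singleton, not_or]
  refine ⟨fun h => ?_, fun h => ?_, fun h => ?_⟩
  · have := (hc.getVert_endpoint_iff (by omega)).1 h
    omega
  · have := hc.getVert_injOn (⟨by omega, by omega⟩ : 1 ≤ 2 ∧ 2 ≤ c.length) ⟨le_rfl, by omega⟩ h
    omega
  · have := hc.getVert_injOn (⟨by omega, by omega⟩ : 1 ≤ 2 ∧ 2 ≤ c.length)
      (⟨by omega, by omega⟩ : 1 ≤ c.length - 1 ∧ c.length - 1 ≤ c.length) h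
    omega

lemma SimpleGraph.Walk.IsCycle.reflTransGen_snd_penultimate [DecidableEq α]
    {G : SimpleGraph α} {u : α} {c : G.Walk u u} (hc : c.IsCycle) :
    ReflTransGen (inducedAdj G (c.support.toFinset.erase u)) c.snd c.penultimate := by
  have := hc.three_le_length
  refine reflTransGen_inducedAdj_getVert c (by omega) (by omega) fun m h1 h2 => ?_
  refine mem_erase.2 ⟨fun h => ?_, List.mem_toFinset.2 (c.getVert_mem_support m)⟩
  have := (hc.getVert_endpoint_iff (by omega)).1 h
  omega

lemma Preserves.adj_of_common_neighbor_of_max_priority [Fintype α] [DecidableEq α]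
    {ω : α → ℝ} {p : α → ℕ} {G : SimpleGraph α} (hω : ∀ i, 0 < ω i) (hpres : Preserves G ω p)
    {T : Finset α} {i j k : α} (hj : j ∈ T) (hmax : ∀ x ∈ T, p x ≤ p j)
    (hji : G.Adj j i) (hjk : G.Adj j k) (hik : i ≠ k) (hT : insert j {i, k} ⊂ T)
    (hreach : ReflTransGen (inducedAdj G (T.erase j)) i k) :
    G.Adj i k := by
  by_contra hnadj
  set S : Finset α := insert j {i, k}
  have hjik : j ∉ ({i, k} : Finset α) := by simp [hji.ne, hjk.ne]
  have hconv := hpres _ (unanimity_empty ⟨i, mem_insert_self i {k}⟩)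
    (wConvex_unanimity (fun i => (hω i).le) p {i, k}) S T hT
  rw [sum_insert hjik, sum_pair hik, wbar_eq_of_forall_le hj hmax] at hconv
  set u := commGame G (unanimity {i, k})
  have hu : ∀ B, u B = if ReflTransGen (inducedAdj G B) i k then 1 else 0 :=
    commGame_unanimity_pair hik
  have hu_zero : ∀ {B : Finset α} {l : α}, l = i ∨ l = k → u (B.erase l) = 0 := fun hl => by
    refine (hu _).trans (if_neg fun hr => ?_)
    have := mem_of_reflTransGen_inducedAdj hr hik
    rcases hl with rfl | rfl <;> simp_all
  have hS : ReflTransGen (inducedAdj G S) i k :=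
    (ReflTransGen.single ⟨by simp [S], by simp [S], hji.symm⟩).tail
      ⟨by simp [S], by simp [S], hjk⟩
  have huT : u T = 1 :=
    (hu T).trans (if_pos (ReflTransGen.mono (inducedAdj_mono (erase_subset j T)) _ _ hreach))
  have huTj : u (T.erase j) = 1 := (hu _).trans (if_pos hreach)
  have huS : u S = 1 := (hu S).trans (if_pos hS)
  have huSj : u (S.erase j) = 0 := by
    rw [hu, erase_insert hjik]
    exact if_neg fun h => hnadj (adj_of_reflTransGen_inducedAdj_pair hik h)
  rw [huT, huTj, huS, huSj, hu_zero (.inl rfl), hu_zero (.inr rfl), hu_zero (.inl rfl),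
    hu_zero (.inr rfl)] at hconv
  linarith [hω j]

theorem neighbors_of_max_priority_vertex_on_cycle_adjacent_general [Fintype α] [DecidableEq α]
    (ω : α → ℝ) (hω : ∀ i, 0 < ω i) (p : α → ℕ)
    (G : SimpleGraph α) (hpres : Preserves G ω p)
    (j : α) (c : G.Walk j j) (hc : c.IsCycle)
    (hmax : ∀ x ∈ c.support, p x ≤ p j) :
    G.Adj (c.getVert 1) (c.getVert (c.length - 1)) := by
  obtain hlen | hlen := hc.three_le_length.eq_or_lt
  · rw [← hlen]
    exact c.adj_getVert_succ (by omega)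
  exact hpres.adj_of_common_neighbor_of_max_priority hω
    (List.mem_toFinset.2 c.start_mem_support) (fun x hx => hmax x (List.mem_toFinset.1 hx))
    (c.adj_snd hc.not_nil) (c.adj_penultimate hc.not_nil).symm hc.snd_ne_penultimate
    (hc.insert_snd_penultimate_ssubset hlen) hc.reflTransGen_snd_penultimate

/-- If `G` preserves `(ω,Σ)`-convexity, `c` is a cycle through `j` (based at `j`), and `j` has
maximal priority among the vertices of the cycle, then the two neighbors of `j` on the cycle
(namely `c.getVert 1` and `c.getVert (c.length - 1)`) are adjacent in `G`. -/
theorem neighbors_of_max_priority_vertex_on_cycle_adjacent [Fintype α] [DecidableEq α]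
    (ω : α → ℝ) (hω : ∀ i, 0 < ω i) (p : α → ℕ) (hp : ∀ i, 1 ≤ p i)
    (G : SimpleGraph α) (hpres : Preserves G ω p)
    (j : α) (c : G.Walk j j) (hc : c.IsCycle)
    (hmax : ∀ x ∈ c.support, p x ≤ p j) :
    G.Adj (c.getVert 1) (c.getVert (c.length - 1)) :=
  neighbors_of_max_priority_vertex_on_cycle_adjacent_general ω hω p G hpres j c hc hmax
end
end
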